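/- arXiv:1305.5055 — 6 statements merged into one kernel-verified Lean document; each statement's English description precedes it below -/
import Mathlib

section
/- Let S be a finite type, R a binary relation on S, and T ⊆ S a set of target states such that from every state s ∈ S some state of T is reachable under R. Then there exists a function σ : S → S such that: (1) for every s ∉ T, R s (σ s) holds; (2) defining the functional relation R' by R' s s' ↔ (s ∉ T ∧ s' = σ s), from every state s ∈ S some state of T is reachable under R'; and (3) R' contains no cycle, i.e., for no s does TransGen R' s s hold. -/
private def reachN {S : Type*} (R : S → S → Prop) (T : Set S) : ℕ → S → Prop
  | 0, s => s ∈ T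
  | n+1, s => s ∈ T ∨ ∃ s', R s s' ∧ reachN R T n s'

private theorem reachN_of_rtg {S : Type*} {R : S → S → Prop} {T : Set S} {s t : S}
    (ht : t ∈ T) (h : Relation.ReflTransGen R s t) : ∃ n, reachN R T n s := by
  induction h using Relation.ReflTransGen.head_induction_on with
  | refl => exact ⟨0, ht⟩
  | head hab _ ih =>
    obtain ⟨n, hn⟩ := ih
    exact ⟨n + 1, Or.inr ⟨_, hab, hn⟩⟩

/-- If from every state some target state of `T` is reachable under `R`, then there
is a choice function `σ` picking one `R`-successor for each non-target state, such
that the induced functional relation still reaches `T` from everywhere and is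
cycle-free. -/
theorem exists_acyclic_successor_choice {S : Type*} [Fintype S]
    (R : S → S → Prop) (T : Set S)
    (hreach : ∀ s : S, ∃ t ∈ T, Relation.ReflTransGen R s t) :
    ∃ σ : S → S,
      (∀ s, s ∉ T → R s (σ s)) ∧
      (∀ s : S, ∃ t ∈ T,
        Relation.ReflTransGen (fun a b => a ∉ T ∧ b = σ a) s t) ∧
      (∀ s : S, ¬ Relation.TransGen (fun a b => a ∉ T ∧ b = σ a) s s) := by
  classical
  have hex : ∀ s : S, ∃ n, reachN R T n s := by
    intro s
    obtain ⟨t, ht, hst⟩ := hreach s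
    exact reachN_of_rtg ht hst
  set d : S → ℕ := fun s => Nat.find (hex s) with hd
  have hdspec : ∀ s, reachN R T (d s) s := fun s => Nat.find_spec (hex s)
  have hdmin : ∀ s n, reachN R T n s → d s ≤ n := fun s n h => Nat.find_min' (hex s) h
  have hdT : ∀ s, s ∈ T → d s = 0 := fun s hs => Nat.le_zero.mp (hdmin s 0 hs)
  -- for s ∉ T, a successor with smaller d exists
  have hsucc : ∀ s, s ∉ T → ∃ s', R s s' ∧ d s' < d s := by
    intro s hs
    have hds : d s ≠ 0 := by
      intro h0
      exact hs (by have := hdspec s; rwa [h0] at this)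
    obtain ⟨m, hm⟩ := Nat.exists_eq_succ_of_ne_zero hds
    have := hdspec s
    rw [hm] at this
    rcases this with h | ⟨s', hRs, hr⟩
    · exact absurd h hs
    · exact ⟨s', hRs, lt_of_le_of_lt (hdmin s' m hr) (hm ▸ Nat.lt_succ_self m)⟩
  set σ : S → S := fun s => if hs : s ∉ T then Classical.choose (hsucc s hs) else s with hσ
  have hσ1 : ∀ s, s ∉ T → R s (σ s) ∧ d (σ s) < d s := by
    intro s hs
    simp only [hσ, dif_pos hs]
    exact Classical.choose_spec (hsucc s hs)
  refine ⟨σ, fun s hs => (hσ1 s hs).1, ?_, ?_⟩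
  · -- reachability: strong induction on d s
    have key : ∀ n s, d s = n →
        ∃ t ∈ T, Relation.ReflTransGen (fun a b => a ∉ T ∧ b = σ a) s t := by
      intro n
      induction n using Nat.strong_induction_on with
      | _ n ih =>
        intro s hn
        by_cases hs : s ∈ T
        · exact ⟨s, hs, Relation.ReflTransGen.refl⟩
        · obtain ⟨hR, hlt⟩ := hσ1 s hs
          obtain ⟨t, ht, htr⟩ := ih (d (σ s)) (hn ▸ hlt) (σ s) rfl
          exact ⟨t, ht, Relation.ReflTransGen.head ⟨hs, rfl⟩ htr⟩
    exact fun s => key (d s) s rfl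
  · -- acyclicity: TransGen strictly decreases d
    have hdec : ∀ a b, Relation.TransGen (fun a b => a ∉ T ∧ b = σ a) a b → d b < d a := by
      intro a b h
      induction h with
      | single h => exact h.2 ▸ (hσ1 a h.1).2
      | tail _ h ih => exact lt_trans (h.2 ▸ (hσ1 _ h.1).2) ih
    exact fun s h => lt_irrefl _ (hdec s s h)
end

section
/- Let S be a finite type, T ⊆ S, and let R' ⊆ R be binary relations on S such that from every state s ∈ S some state of T is reachable under R', and R' is edge-minimal with this property (i.e., for every relation R'' strictly contained in R', some state fails to reach T under R''). Then R' contains no cycle (for no s does TransGen R' s s hold), every state s ∉ T has exactly one R'-successor, and every state t ∈ T has no R'-successor. -/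
open Relation

private def pathN {S : Type*} (R : S → S → Prop) : ℕ → S → S → Prop
  | 0 => Eq
  | n + 1 => fun a c => ∃ b, R a b ∧ pathN R n b c

private lemma reflTransGen_iff_pathN {S : Type*} (R : S → S → Prop) (a b : S) :
    ReflTransGen R a b ↔ ∃ n, pathN R n a b := by
  constructor
  · intro h
    induction h using ReflTransGen.head_induction_on with
    | refl => exact ⟨0, rfl⟩
    | head h _ ih => obtain ⟨n, hn⟩ := ih; exact ⟨n + 1, _, h, hn⟩
  · rintro ⟨n, hn⟩
    induction n generalizing a with
    | zero => exact hn ▸ .refl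
    | succ n ih => obtain ⟨c, hc, hp⟩ := hn; exact .head hc (ih c hp)

/-- If `R' ⊆ R` reaches `T` from every state and is edge-minimal with this property,
then `R'` is cycle-free, every non-target state has exactly one `R'`-successor, and
target states have no `R'`-successor. -/
theorem minimal_reaching_subrelation_structure {S : Type*} [Fintype S]
    (R R' : S → S → Prop) (T : Set S)
    (hsub : ∀ a b, R' a b → R a b)
    (hreach : ∀ s : S, ∃ t ∈ T, Relation.ReflTransGen R' s t)
    (hmin : ∀ R'' : S → S → Prop, (∀ a b, R'' a b → R' a b) → R'' ≠ R' →
      ∃ s : S, ¬ ∃ t ∈ T, Relation.ReflTransGen R'' s t) :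
    (∀ s : S, ¬ Relation.TransGen R' s s) ∧
    (∀ s, s ∉ T → ∃! s', R' s s') ∧
    (∀ t ∈ T, ∀ s', ¬ R' t s') := by
  classical
  -- existence of some path length to T from every state
  have hP : ∀ s : S, ∃ n, ∃ t ∈ T, pathN R' n s t := by
    intro s
    obtain ⟨t, ht, hst⟩ := hreach s
    obtain ⟨n, hn⟩ := (reflTransGen_iff_pathN R' s t).1 hst
    exact ⟨n, t, ht, hn⟩
  -- d s = length of shortest path from s to T
  set d : S → ℕ := fun s => Nat.find (hP s) with hd
  have d_min : ∀ s n, (∃ t ∈ T, pathN R' n s t) → d s ≤ n := fun s n h => Nat.find_min' _ h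
  have d_spec : ∀ s, ∃ t ∈ T, pathN R' (d s) s t := fun s => Nat.find_spec (hP s)
  have dT : ∀ t ∈ T, d t = 0 := fun t ht =>
    Nat.le_zero.mp (d_min t 0 ⟨t, ht, rfl⟩)
  -- the relation of "decreasing" edges
  set Rdec : S → S → Prop := fun u v => R' u v ∧ d v < d u with hRdec
  -- every state reaches T using only decreasing edges
  have A' : ∀ n x, d x ≤ n → ∃ t ∈ T, ReflTransGen Rdec x t := by
    intro n
    induction n with
    | zero =>
      intro x hx
      obtain ⟨t, ht, hp⟩ := d_spec x
      rw [Nat.le_zero.mp hx] at hp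
      exact ⟨t, ht, hp ▸ .refl⟩
    | succ n ih =>
      intro x hx
      obtain ⟨t, ht, hp⟩ := d_spec x
      rcases hdx : d x with _ | m
      · rw [hdx] at hp; exact ⟨t, ht, hp ▸ .refl⟩
      · rw [hdx] at hp
        obtain ⟨y, hxy, hyp⟩ := hp
        have hdy : d y ≤ m := d_min y m ⟨t, ht, hyp⟩
        have hlt : d y < d x := by omega
        obtain ⟨t', ht', hpath⟩ := ih y (by omega)
        exact ⟨t', ht', .head ⟨hxy, hlt⟩ hpath⟩
  have A'' : ∀ x, ∃ t ∈ T, ReflTransGen Rdec x t := fun x => A' (d x) x le_rfl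
  -- every edge of R' strictly decreases d
  have edge_dec : ∀ a b, R' a b → d b < d a := by
    intro a b hab
    by_contra hge
    have hne : Rdec ≠ R' := by
      intro h
      exact hge (h ▸ hab : Rdec a b).2
    obtain ⟨s, hs⟩ := hmin Rdec (fun _ _ h => h.1) hne
    exact hs (A'' s)
  -- no cycles
  have no_cycle : ∀ s s', TransGen R' s s' → d s' < d s := by
    intro s s' h
    induction h with
    | single h => exact edge_dec _ _ h
    | tail _ h ih => exact (edge_dec _ _ h).trans ih
  refine ⟨fun s h => lt_irrefl _ (no_cycle s s h), ?_, ?_⟩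
  · -- unique successor for non-target states
    intro s hsT
    obtain ⟨t, ht, hst⟩ := hreach s
    rcases hst.cases_head with rfl | ⟨b, hb, -⟩
    · exact absurd ht hsT
    refine ⟨b, hb, ?_⟩
    intro c hc
    by_contra hne
    -- remove the edge (s, c)
    set R'' : S → S → Prop := fun u v => R' u v ∧ ¬(u = s ∧ v = c) with hR''
    have hR''ne : R'' ≠ R' := by
      intro h
      exact (h ▸ hc : R'' s c).2 ⟨rfl, rfl⟩
    -- paths of decreasing edges starting strictly below d s avoid s
    have conv : ∀ y t', ReflTransGen Rdec y t' → d y < d s → ReflTransGen R'' y t' := by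
      intro y t' h
      induction h using ReflTransGen.head_induction_on with
      | refl => exact fun _ => .refl
      | @head a z hz _ ih =>
        intro hlt
        refine .head ⟨hz.1, ?_⟩ (ih (hz.2.trans hlt))
        rintro ⟨rfl, rfl⟩
        exact lt_irrefl _ hlt
    -- every state still reaches T under R''
    have reach'' : ∀ x : S, ∃ t' ∈ T, ReflTransGen R'' x t' := by
      intro x
      obtain ⟨t', ht', hpath⟩ := A'' x
      clear hst
      induction hpath using ReflTransGen.head_induction_on with
      | refl => exact ⟨t', ht', .refl⟩
      | @head a z hz _ ih =>
        by_cases has : a = s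
        · subst has
          have hdb : d b < d a := edge_dec _ _ hb
          obtain ⟨u, hu, hupath⟩ := A'' b
          refine ⟨u, hu, .head ⟨hb, ?_⟩ (conv b u hupath hdb)⟩
          rintro ⟨-, rfl⟩
          exact hne rfl
        · obtain ⟨u, hu, hupath⟩ := ih
          exact ⟨u, hu, .head ⟨hz.1, fun h => has h.1⟩ hupath⟩
    obtain ⟨x, hx⟩ := hmin R'' (fun _ _ h => h.1) hR''ne
    exact hx (reach'' x)
  · -- target states have no successors
    intro t ht s' hts'
    have := edge_dec t s' hts'
    rw [dT t ht] at this
    omega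
end

section
/- Let S be a finite type partitioned into three disjoint sets T, U, W, and let P : S → S → ℝ be a nonnegative function such that for every s ∈ W the row sum ∑_{s' ∈ S} P s s' is at most 1. Assume that from every s ∈ W some state of T is reachable under the relation relating a to b whenever P a b > 0. Let q : S → ℝ satisfy q t = 1 for t ∈ T, q u = 0 for u ∈ U, and q s = ∑_{s' ∈ S} P s s' · q s' for s ∈ W. Let p : S → ℝ satisfy p s ≤ 1 for all s, p t = 1 for t ∈ T, p u = 0 for u ∈ U, and p s ≤ ∑_{s' ∈ S} P s s' · p s' for s ∈ W. Then p s ≤ q s for every s ∈ S. -/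
open Finset in
/-- Comparison of a sub-solution `p` with the solution `q` of the reachability
equation system of a sub-stochastic matrix: `p ≤ q` pointwise. -/
theorem sub_solution_le_solution {S : Type*} [Fintype S]
    (T U W : Set S)
    (hTU : Disjoint T U) (hTW : Disjoint T W) (hUW : Disjoint U W)
    (hcover : T ∪ U ∪ W = Set.univ)
    (P : S → S → ℝ) (hP : ∀ s s', 0 ≤ P s s')
    (hrow : ∀ s ∈ W, ∑ s' : S, P s s' ≤ 1)
    (hreach : ∀ s ∈ W, ∃ t ∈ T, Relation.ReflTransGen (fun a b => 0 < P a b) s t)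
    (q : S → ℝ)
    (hqT : ∀ t ∈ T, q t = 1) (hqU : ∀ u ∈ U, q u = 0)
    (hqW : ∀ s ∈ W, q s = ∑ s' : S, P s s' * q s')
    (p : S → ℝ) (hple : ∀ s, p s ≤ 1)
    (hpT : ∀ t ∈ T, p t = 1) (hpU : ∀ u ∈ U, p u = 0)
    (hpW : ∀ s ∈ W, p s ≤ ∑ s' : S, P s s' * p s') :
    ∀ s : S, p s ≤ q s := by
  intro s₀
  by_contra hcon
  push_neg at hcon
  set d : S → ℝ := fun s => p s - q s with hd
  have hNE : (Finset.univ : Finset S).Nonempty := ⟨s₀, mem_univ s₀⟩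
  obtain ⟨m, -, hm⟩ := Finset.exists_max_image Finset.univ d hNE
  set M : ℝ := d m with hM
  have hMle : ∀ s, d s ≤ M := fun s => hm s (mem_univ s)
  have hMpos : 0 < M := lt_of_lt_of_le (by simp [hd]; linarith) (hMle s₀)
  -- key: any state attaining the max M is in W and all its successors attain M
  have key : ∀ s, d s = M → s ∈ W ∧ ∀ s', 0 < P s s' → d s' = M := by
    intro s hs
    have hsW : s ∈ W := by
      have : s ∈ T ∪ U ∪ W := hcover ▸ Set.mem_univ s
      rcases this with (hT | hU) | hW
      · exfalso
        have : d s = 0 := by simp [hd, hpT s hT, hqT s hT]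
        linarith [this ▸ hs ▸ hMpos]
      · exfalso
        have : d s = 0 := by simp [hd, hpU s hU, hqU s hU]
        linarith [this ▸ hs ▸ hMpos]
      · exact hW
    refine ⟨hsW, ?_⟩
    have h1 : M ≤ ∑ s' : S, P s s' * d s' := by
      have := hpW s hsW
      have hq := hqW s hsW
      have : p s - q s ≤ ∑ s' : S, P s s' * p s' - ∑ s' : S, P s s' * q s' := by
        linarith
      calc M = d s := hs.symm
        _ ≤ ∑ s' : S, P s s' * p s' - ∑ s' : S, P s s' * q s' := this
        _ = ∑ s' : S, P s s' * d s' := by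
            rw [← Finset.sum_sub_distrib]
            exact Finset.sum_congr rfl fun s' _ => by simp [hd]; ring
    have h2 : ∑ s' : S, P s s' * (M - d s') ≤ 0 := by
      have hrs := hrow s hsW
      have : ∑ s' : S, P s s' * (M - d s') =
          M * (∑ s' : S, P s s') - ∑ s' : S, P s s' * d s' := by
        rw [Finset.mul_sum, ← Finset.sum_sub_distrib]
        exact Finset.sum_congr rfl fun s' _ => by ring
      rw [this]
      nlinarith
    have h3 : ∑ s' : S, P s s' * (M - d s') = 0 :=
      le_antisymm h2 (Finset.sum_nonneg fun s' _ =>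
        mul_nonneg (hP s s') (by linarith [hMle s']))
    intro s' hs'
    have := (Finset.sum_eq_zero_iff_of_nonneg (fun s' _ =>
      mul_nonneg (hP s s') (by linarith [hMle s']))).1 h3 s' (mem_univ s')
    rcases mul_eq_zero.1 this with h | h
    · linarith
    · linarith
  -- propagate M along reachability
  have prop : ∀ {a b : S}, Relation.ReflTransGen (fun a b => 0 < P a b) a b →
      d a = M → d b = M := by
    intro a b hab
    induction hab with
    | refl => exact fun h => h
    | tail _ hbc ih => exact fun h => ((key _ (ih h)).2 _ hbc)
  -- m attains the max, m ∈ W, reach T, contradiction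
  have hmW : m ∈ W := (key m rfl).1
  obtain ⟨t, htT, hpath⟩ := hreach m hmW
  have : d t = M := prop hpath rfl
  have : d t = 0 := by simp [hd, hpT t htT, hqT t htT]
  linarith
end

section
/- Let S be a finite type partitioned into three disjoint sets T, U, W, and let P : S → S → ℝ be a nonnegative function such that for every s ∈ W the row sum ∑_{s' ∈ S} P s s' is at most 1. Assume that from every s ∈ W some state of T is reachable under the relation relating a to b whenever P a b > 0. Then the linear equation system q t = 1 for t ∈ T, q u = 0 for u ∈ U, q s = ∑_{s' ∈ S} P s s' · q s' for s ∈ W has at most one solution q : S → ℝ; that is, any two functions q₁, q₂ : S → ℝ satisfying all these equations are equal. -/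
open Finset in
/-- The linear equation system for reachability probabilities of a sub-stochastic
matrix has at most one solution. -/
theorem reachability_equation_system_unique {S : Type*} [Fintype S]
    (T U W : Set S)
    (hTU : Disjoint T U) (hTW : Disjoint T W) (hUW : Disjoint U W)
    (hcover : T ∪ U ∪ W = Set.univ)
    (P : S → S → ℝ) (hP : ∀ s s', 0 ≤ P s s')
    (hrow : ∀ s ∈ W, ∑ s' : S, P s s' ≤ 1)
    (hreach : ∀ s ∈ W, ∃ t ∈ T, Relation.ReflTransGen (fun a b => 0 < P a b) s t)
    (q₁ q₂ : S → ℝ)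
    (hq₁T : ∀ t ∈ T, q₁ t = 1) (hq₁U : ∀ u ∈ U, q₁ u = 0)
    (hq₁W : ∀ s ∈ W, q₁ s = ∑ s' : S, P s s' * q₁ s')
    (hq₂T : ∀ t ∈ T, q₂ t = 1) (hq₂U : ∀ u ∈ U, q₂ u = 0)
    (hq₂W : ∀ s ∈ W, q₂ s = ∑ s' : S, P s s' * q₂ s') :
    q₁ = q₂ := by
  cases isEmpty_or_nonempty S with
  | inl h => exact funext fun s => (IsEmpty.false s).elim
  | inr h =>
  classical
  set d : S → ℝ := fun s => q₁ s - q₂ s with hd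
  -- d is zero on T and U
  have hdTU : ∀ s, s ∈ T ∪ U → d s = 0 := by
    intro s hs
    cases hs with
    | inl hs => simp [hd, hq₁T s hs, hq₂T s hs]
    | inr hs => simp [hd, hq₁U s hs, hq₂U s hs]
  have hdW : ∀ s ∈ W, d s = ∑ s' : S, P s s' * d s' := by
    intro s hs
    simp only [hd, mul_sub, Finset.sum_sub_distrib]
    rw [← hq₁W s hs, ← hq₂W s hs]
  set M : ℝ := Finset.univ.sup' Finset.univ_nonempty (fun s => |d s|) with hM
  have hle : ∀ s, |d s| ≤ M := fun s =>
    Finset.le_sup' (fun s => |d s|) (Finset.mem_univ s)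
  suffices hM0 : M ≤ 0 by
    funext s
    have h1 := hle s
    have h2 : |d s| = 0 := le_antisymm (h1.trans hM0) (abs_nonneg _)
    have := abs_eq_zero.mp h2
    simpa [hd, sub_eq_zero] using this
  by_contra hpos
  push_neg at hpos
  -- M is attained at some s₀
  obtain ⟨s₀, -, hs₀⟩ := Finset.exists_mem_eq_sup' Finset.univ_nonempty (fun s => |d s|)
  have hs₀M : |d s₀| = M := hs₀.symm
  -- any state with |d s| = M lies in W
  have hmemW : ∀ s, |d s| = M → s ∈ W := by
    intro s hsM
    have hs : s ∈ T ∪ U ∪ W := hcover ▸ Set.mem_univ s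
    rcases hs with hs | hs
    · exfalso
      have := hdTU s hs
      rw [this] at hsM
      simp at hsM
      exact absurd hsM.symm (ne_of_gt hpos)
    · exact hs
  -- propagation: if |d s| = M and P s s' > 0 then |d s'| = M
  have hstep : ∀ s, |d s| = M → ∀ s', 0 < P s s' → |d s'| = M := by
    intro s hsM s' hPs'
    by_contra hne
    have hlt : |d s'| < M := lt_of_le_of_ne (hle s') hne
    have hsW := hmemW s hsM
    have key : M ≤ ∑ x : S, P s x * |d x| := by
      calc M = |d s| := hsM.symm
        _ = |∑ x : S, P s x * d x| := by rw [hdW s hsW]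
        _ ≤ ∑ x : S, |P s x * d x| := Finset.abs_sum_le_sum_abs _ _
        _ = ∑ x : S, P s x * |d x| := by
            refine Finset.sum_congr rfl fun x _ => ?_
            rw [abs_mul, abs_of_nonneg (hP s x)]
    have bound : ∑ x : S, P s x * |d x| < M := by
      have e1 : ∑ x : S, P s x * |d x|
          = (∑ x ∈ Finset.univ.erase s', P s x * |d x|) + P s s' * |d s'| :=
        (Finset.sum_erase_add _ _ (Finset.mem_univ s')).symm
      have e2 : ∑ x : S, P s x * M
          = (∑ x ∈ Finset.univ.erase s', P s x * M) + P s s' * M :=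
        (Finset.sum_erase_add _ _ (Finset.mem_univ s')).symm
      have h2 : (∑ x ∈ Finset.univ.erase s', P s x * |d x|)
          ≤ ∑ x ∈ Finset.univ.erase s', P s x * M := by
        exact Finset.sum_le_sum fun x _ => mul_le_mul_of_nonneg_left (hle x) (hP s x)
      have h3 : P s s' * |d s'| < P s s' * M :=
        mul_lt_mul_of_pos_left hlt hPs'
      have h4 : ∑ x : S, P s x * M ≤ M := by
        rw [← Finset.sum_mul]
        calc (∑ x : S, P s x) * M ≤ 1 * M :=
              mul_le_mul_of_nonneg_right (hrow s hsW) (le_of_lt hpos)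
          _ = M := one_mul M
      linarith
    linarith
  -- follow a path from s₀ to T
  obtain ⟨t, htT, hpath⟩ := hreach s₀ (hmemW s₀ hs₀M)
  have hAll : ∀ x, Relation.ReflTransGen (fun a b => 0 < P a b) s₀ x → |d x| = M := by
    intro x hx
    induction hx with
    | refl => exact hs₀M
    | tail hbc hr ih => exact hstep _ ih _ hr
  have h0 : d t = 0 := hdTU t (Or.inl htT)
  have := hAll t hpath
  rw [h0] at this
  simp at this
  exact absurd this.symm (ne_of_gt hpos)
end

section
/- Let U be a finite type and P : U → U → ℝ a nonnegative function such that for every s ∈ U the row sum ∑_{s' ∈ U} P s s' is at most 1. Let p : U → ℝ satisfy 0 ≤ p s and p s ≤ ∑_{s' ∈ U} P s s' · p s' for all s ∈ U. Assume that from every s ∈ U there is a reachable state t (under the relation a → b defined by P a b > 0) whose row sum satisfies ∑_{s' ∈ U} P t s' < 1. Then p s = 0 for every s ∈ U. -/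
open Finset in
/-- If `P` is sub-stochastic, `p` is a nonnegative sub-harmonic function and from
every state some state with row sum strictly below 1 is reachable, then `p ≡ 0`. -/
theorem subharmonic_eq_zero {U : Type*} [Fintype U]
    (P : U → U → ℝ) (hP : ∀ s s', 0 ≤ P s s')
    (hrow : ∀ s : U, ∑ s' : U, P s s' ≤ 1)
    (p : U → ℝ) (hp0 : ∀ s, 0 ≤ p s)
    (hpsub : ∀ s : U, p s ≤ ∑ s' : U, P s s' * p s')
    (hreach : ∀ s : U, ∃ t : U,
      Relation.ReflTransGen (fun a b => 0 < P a b) s t ∧ ∑ s' : U, P t s' < 1) :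
    ∀ s : U, p s = 0 := by
  intro s
  obtain ⟨m, -, hmax⟩ := Finset.exists_max_image Finset.univ p ⟨s, Finset.mem_univ s⟩
  have hmax' : ∀ a : U, p a ≤ p m := fun a => hmax a (Finset.mem_univ a)
  set M := p m with hM
  rcases eq_or_lt_of_le (hp0 m) with h0 | hMpos
  · exact le_antisymm (h0 ▸ hmax' s) (hp0 s)
  -- key: along reachability from m, p stays equal to M
  have key : ∀ a : U, Relation.ReflTransGen (fun a b => 0 < P a b) m a → p a = M := by
    intro a ha
    induction ha with
    | refl => rfl
    | tail hbc hPbc ih =>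
      rename_i b c
      -- p b = M; show p c = M
      have hsum0 : ∑ s' : U, P b s' * (M - p s') = 0 := by
        have hle : ∑ s' : U, P b s' * (M - p s') ≤ 0 := by
          have h1 : ∑ s' : U, P b s' * (M - p s') =
              (∑ s' : U, P b s') * M - ∑ s' : U, P b s' * p s' := by
            rw [Finset.sum_mul, ← Finset.sum_sub_distrib]
            exact Finset.sum_congr rfl fun s' _ => by ring
          rw [h1]
          have h2 : (∑ s' : U, P b s') * M ≤ M :=
            by nlinarith [hrow b]
          have h3 : M ≤ ∑ s' : U, P b s' * p s' := ih ▸ hpsub b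
          linarith
        have hge : 0 ≤ ∑ s' : U, P b s' * (M - p s') :=
          Finset.sum_nonneg fun s' _ =>
            mul_nonneg (hP b s') (sub_nonneg.mpr (hmax' s'))
        linarith
      have := (Finset.sum_eq_zero_iff_of_nonneg
        (fun s' _ => mul_nonneg (hP b s') (sub_nonneg.mpr (hmax' s')))).mp hsum0
          c (Finset.mem_univ c)
      have hc : M - p c = 0 := by
        rcases mul_eq_zero.mp this with h | h
        · exact absurd h (ne_of_gt hPbc)
        · exact h
      linarith
  obtain ⟨t, hmt, hrt⟩ := hreach m
  have hpt : p t = M := key t hmt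
  have : M ≤ ∑ s' : U, P t s' * p s' := hpt ▸ hpsub t
  have h4 : ∑ s' : U, P t s' * p s' ≤ (∑ s' : U, P t s') * M := by
    rw [Finset.sum_mul]
    exact Finset.sum_le_sum fun s' _ => mul_le_mul_of_nonneg_left (hmax' s') (hP t s')
  have h5 : (∑ s' : U, P t s') * M < M := by
    nlinarith
  linarith
end

section
/- Let S be a type, T ⊆ S, and let R' ⊆ R be binary relations on S. Suppose that from a state s₀ some state of T is reachable under R, but no state of T is reachable from s₀ under R'. Then there exist states t and u such that t is reachable from s₀ under R', R t u holds, and R' t u does not hold. (In words: on the R'-reachable part from s₀ some edge of R must have been removed.) -/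
/-- If `T` is reachable from `s₀` under `R` but not under the subrelation `R'`,
then some `R`-edge on the `R'`-reachable part from `s₀` has been removed. -/
theorem removed_edge_on_reachable_part {S : Type*}
    (R R' : S → S → Prop) (T : Set S)
    (hsub : ∀ a b, R' a b → R a b) (s₀ : S)
    (hR : ∃ t ∈ T, Relation.ReflTransGen R s₀ t)
    (hR' : ¬ ∃ t ∈ T, Relation.ReflTransGen R' s₀ t) :
    ∃ t u, Relation.ReflTransGen R' s₀ t ∧ R t u ∧ ¬ R' t u := by
  obtain ⟨t, htT, hpath⟩ := hR
  have key : ∀ a, Relation.ReflTransGen R a t → Relation.ReflTransGen R' s₀ a →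
      ¬ Relation.ReflTransGen R' s₀ t →
      ∃ x u, Relation.ReflTransGen R' s₀ x ∧ R x u ∧ ¬ R' x u := by
    intro a h
    induction h using Relation.ReflTransGen.head_induction_on with
    | refl => intro hs hns; exact absurd hs hns
    | @head b c hab _ ih =>
      intro hs hns
      by_cases h' : R' b c
      · exact ih (hs.tail h') hns
      · exact ⟨_, _, hs, hab, h'⟩
  exact key s₀ hpath .refl (fun h => hR' ⟨t, htT, h⟩)
end
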